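/- If A₁, A₂ are symmetric n×n matrices and there exists μ ∈ R with μA₁ + A₂ positive definite, then the set F = {x ∈ R^n : x^T A₁ x = 1 and x^T A₂ x ≤ 1} is compact. -/

import Mathlib

open Matrix

/-!
On `F` the positive definite form `xᵀ (μ A₁ + A₂) x = μ + xᵀ A₂ x` is at most `μ + 1`, and the
sublevel sets of a positive definite form are compact, since it dominates `c ‖x‖²` with `c > 0`
its minimum on the unit sphere. As `F` is closed, it is compact.
-/

/-- The quadratic form `xᵀ A x` on Euclidean space. -/
noncomputable def quadForm {n : ℕ} (A : Matrix (Fin n) (Fin n) ℝ)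
    (x : EuclideanSpace ℝ (Fin n)) : ℝ :=
  ∑ i, ∑ j, A i j * x i * x j

section Homogeneous

variable {E : Type*} [NormedAddCommGroup E] [NormedSpace ℝ E] [ProperSpace E] {f : E → ℝ}

theorem exists_pos_mul_norm_sq_le (hf : Continuous f)
    (hsmul : ∀ (t : ℝ) (x : E), f (t • x) = t ^ 2 * f x) (hpos : ∀ x, x ≠ 0 → 0 < f x) :
    ∃ c > 0, ∀ x, c * ‖x‖ ^ 2 ≤ f x := by
  have hf0 : f 0 = 0 := by simpa using hsmul 0 0
  rcases subsingleton_or_nontrivial E with hE | hE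
  · exact ⟨1, one_pos, fun x => by simp [Subsingleton.elim x 0, hf0]⟩
  obtain ⟨x₀, hx₀, hmin⟩ := (isCompact_sphere (0 : E) 1).exists_isMinOn
    (NormedSpace.sphere_nonempty.2 zero_le_one) hf.continuousOn
  refine ⟨f x₀, hpos x₀ (ne_zero_of_mem_unit_sphere ⟨x₀, hx₀⟩), fun x => ?_⟩
  rcases eq_or_ne x 0 with rfl | hx
  · simp [hf0]
  have hu : ‖x‖⁻¹ • x ∈ Metric.sphere (0 : E) 1 := by simp [norm_smul, hx]
  calc f x₀ * ‖x‖ ^ 2 ≤ f (‖x‖⁻¹ • x) * ‖x‖ ^ 2 := by gcongr; exact hmin hu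
    _ = f x := by rw [hsmul]; field_simp

theorem isCompact_setOf_le_of_homogeneous (hf : Continuous f)
    (hsmul : ∀ (t : ℝ) (x : E), f (t • x) = t ^ 2 * f x) (hpos : ∀ x, x ≠ 0 → 0 < f x) (r : ℝ) :
    IsCompact {x | f x ≤ r} := by
  obtain ⟨c, hc, hle⟩ := exists_pos_mul_norm_sq_le hf hsmul hpos
  refine Metric.isCompact_of_isClosed_isBounded (isClosed_le hf continuous_const)
    (isBounded_iff_forall_norm_le.2 ⟨√(r / c), fun x hx => ?_⟩)
  have hsq : ‖x‖ ^ 2 ≤ r / c := by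
    rw [le_div_iff₀ hc]
    linarith [hle x, hx.out]
  simpa using Real.abs_le_sqrt hsq

end Homogeneous

section QuadForm

variable {n : ℕ}

theorem quadForm_eq_dotProduct (A : Matrix (Fin n) (Fin n) ℝ) (x : EuclideanSpace ℝ (Fin n)) :
    quadForm A x = x.ofLp ⬝ᵥ A *ᵥ x.ofLp := by
  simp only [quadForm, dotProduct, mulVec, Finset.mul_sum]
  exact Finset.sum_congr rfl fun i _ => Finset.sum_congr rfl fun j _ => by ring

theorem continuous_quadForm (A : Matrix (Fin n) (Fin n) ℝ) : Continuous (quadForm A) := by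
  unfold quadForm
  fun_prop

theorem quadForm_smul (A : Matrix (Fin n) (Fin n) ℝ) (t : ℝ) (x : EuclideanSpace ℝ (Fin n)) :
    quadForm A (t • x) = t ^ 2 * quadForm A x := by
  simp only [quadForm_eq_dotProduct, WithLp.ofLp_smul, mulVec_smul, dotProduct_smul,
    smul_dotProduct, smul_eq_mul]
  ring

theorem quadForm_smul_add (A₁ A₂ : Matrix (Fin n) (Fin n) ℝ) (μ : ℝ)
    (x : EuclideanSpace ℝ (Fin n)) :
    quadForm (μ • A₁ + A₂) x = μ * quadForm A₁ x + quadForm A₂ x := by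
  simp only [quadForm_eq_dotProduct, add_mulVec, smul_mulVec, dotProduct_add, dotProduct_smul,
    smul_eq_mul]

end QuadForm

theorem stmt3_general {n : ℕ} (A₁ A₂ : Matrix (Fin n) (Fin n) ℝ)
    (μ : ℝ) (hpd : ∀ x : Fin n → ℝ, x ≠ 0 → 0 < x ⬝ᵥ (μ • A₁ + A₂).mulVec x) :
    IsCompact {x : EuclideanSpace ℝ (Fin n) | quadForm A₁ x = 1 ∧ quadForm A₂ x ≤ 1} := by
  have hpos : ∀ x : EuclideanSpace ℝ (Fin n), x ≠ 0 → 0 < quadForm (μ • A₁ + A₂) x :=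
    fun x hx => (quadForm_eq_dotProduct _ x).symm ▸ hpd x.ofLp (by simpa using hx)
  have hsublevel := isCompact_setOf_le_of_homogeneous (continuous_quadForm _) (quadForm_smul _)
    hpos (μ + 1)
  have hclosed : IsClosed {x : EuclideanSpace ℝ (Fin n) | quadForm A₁ x = 1 ∧ quadForm A₂ x ≤ 1} :=
    (isClosed_eq (continuous_quadForm A₁) continuous_const).inter
      (isClosed_le (continuous_quadForm A₂) continuous_const)
  refine hsublevel.of_isClosed_subset hclosed fun x ⟨h₁, h₂⟩ => ?_
  change quadForm (μ • A₁ + A₂) x ≤ μ + 1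
  rw [quadForm_smul_add, h₁]
  linarith

theorem stmt3 {n : ℕ} (A₁ A₂ : Matrix (Fin n) (Fin n) ℝ) (h1 : A₁ᵀ = A₁) (h2 : A₂ᵀ = A₂)
    (μ : ℝ) (hpd : ∀ x : Fin n → ℝ, x ≠ 0 → 0 < x ⬝ᵥ (μ • A₁ + A₂).mulVec x) :
    IsCompact {x : EuclideanSpace ℝ (Fin n) | quadForm A₁ x = 1 ∧ quadForm A₂ x ≤ 1} :=
  stmt3_general A₁ A₂ μ hpd
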